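/- arXiv:1810.08868 — 4 statements merged into one kernel-verified Lean document; each statement's English description precedes it below -/
import Mathlib

section
/- Let g_N be a taming function with ν = 1. There exists a constant C_N ≥ 0, depending only on g_N, such that for every smooth ℤ³-periodic divergence-free vector field u : ℝ³ → ℝ³, ∫_{[0,1]³} ⟨Δu(x) − ((u·∇)u)(x) − g_N(|u(x)|²)u(x), u(x)⟩ dx ≤ C_N ‖u‖_{L²}². (This is the L²-energy estimate ⟨F(u), u⟩_{H⁰} ≤ C_N‖u‖²_{H⁰} for the tamed Navier–Stokes drift F(u) = Δu − (u·∇)u − g_N(|u|²)u, tested against divergence-free fields so that the Leray projection drops out.) -/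
open MeasureTheory

noncomputable section

/-- Vector fields on `ℝ³` with values in `ℝ³`. -/
abbrev V3 := Fin 3 → ℝ

/-- `ℤ³`-periodicity: `u (x + k) = u x` for every integer vector `k`. -/
def IsPeriodic (u : V3 → V3) : Prop :=
  ∀ (x : V3) (k : Fin 3 → ℤ), u (x + fun i => (k i : ℝ)) = u x

/-- The `i`-th partial derivative `∂ᵢ u` at `x`. -/
def pd (u : V3 → V3) (i : Fin 3) (x : V3) : V3 :=
  fderiv ℝ u x (Pi.single i 1)

/-- Divergence-free condition `∑ᵢ ∂ᵢ uⁱ = 0`. -/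
def IsDivFree (u : V3 → V3) : Prop :=
  ∀ x : V3, ∑ i : Fin 3, pd u i x i = 0

/-- The Laplacian `Δu = ∑ᵢ ∂ᵢ∂ᵢ u`. -/
def lap (u : V3 → V3) (x : V3) : V3 :=
  ∑ i : Fin 3, fderiv ℝ (pd u i) x (Pi.single i 1)

/-- The convection term `(u·∇)v = ∑ᵢ uⁱ ∂ᵢ v`. -/
def conv (u v : V3 → V3) (x : V3) : V3 :=
  ∑ i : Fin 3, u x i • pd v i x

/-- Euclidean inner product on `ℝ³`. -/
def dot (a b : V3) : ℝ := ∑ j : Fin 3, a j * b j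

/-- Squared Euclidean norm on `ℝ³`. -/
def normSq (a : V3) : ℝ := ∑ j : Fin 3, (a j) ^ 2

/-- The periodicity cell `[0,1]³`. -/
def cube : Set V3 := Set.Icc 0 1

/-- `‖u‖²_{L²} = ∫_{[0,1]³} |u|² dx`. -/
def l2sq (u : V3 → V3) : ℝ := ∫ x in cube, normSq (u x)

/-- `|∇u(x)|² = ∑_{i,j} |∂ᵢ uʲ(x)|²`. -/
def gradSq (u : V3 → V3) (x : V3) : ℝ := ∑ i : Fin 3, normSq (pd u i x)

/-- `‖u‖²_{H¹} = ∫_{[0,1]³} (|u|² + |∇u|²) dx`. -/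
def h1sq (u : V3 → V3) : ℝ := ∫ x in cube, (normSq (u x) + gradSq u x)

/-- `‖u‖²_{H²} = ∫_{[0,1]³} |u - Δu|² dx`. -/
def h2sq (u : V3 → V3) : ℝ := ∫ x in cube, normSq (u x - lap u x)

/-- A taming function with `ν = 1`: a smooth `g : ℝ → ℝ` vanishing on `(-∞, N]`,
equal to `r - N` on `[N+1, ∞)`, with derivative between `0` and some `C₀ > 0`. -/
def IsTaming (N : ℝ) (g : ℝ → ℝ) : Prop :=
  ContDiff ℝ (⊤ : ℕ∞) g ∧ (∀ r ≤ N, g r = 0) ∧ (∀ r, N + 1 ≤ r → g r = r - N) ∧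
    ∃ C₀ > 0, ∀ r, 0 ≤ deriv g r ∧ deriv g r ≤ C₀

end

/-! For divergence-free `u` one has pointwise
`2⟨Δu - (u·∇)u, u⟩ + 2|∇u|² = ∑ᵢ ∂ᵢ(2⟨∂ᵢu, u⟩ - uⁱ|u|²)`,
and by the divergence theorem the divergence of a periodic field integrates to zero over the
unit cell, the contributions of opposite faces cancelling. The taming term contributes
`-g_N(|u|²)|u|² ≤ 0`, since `g_N` is monotone and vanishes at `N`. Hence the left-hand side is
at most `-‖∇u‖²_{L²} ≤ 0`, and `C_N = 0` works. -/

open Finset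
open scoped Matrix

theorem fderiv_dotProduct_apply {n E : Type*} [Fintype n] [NormedAddCommGroup E]
    [NormedSpace ℝ E] {f g : E → n → ℝ} {x : E} (hf : DifferentiableAt ℝ f x)
    (hg : DifferentiableAt ℝ g x) (v : E) :
    fderiv ℝ (fun y => f y ⬝ᵥ g y) x v = fderiv ℝ f x v ⬝ᵥ g x + f x ⬝ᵥ fderiv ℝ g x v := by
  have hfj := hasFDerivAt_pi'.1 hf.hasFDerivAt
  have hgj := hasFDerivAt_pi'.1 hg.hasFDerivAt
  simp only [dotProduct]
  rw [(HasFDerivAt.fun_sum fun j _ => (hfj j).fun_mul (hgj j)).fderiv]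
  simp [← sum_add_distrib, mul_comm, add_comm]

@[fun_prop]
theorem DifferentiableAt.dotProduct {n E : Type*} [Fintype n] [NormedAddCommGroup E]
    [NormedSpace ℝ E] {f g : E → n → ℝ} {x : E} (hf : DifferentiableAt ℝ f x)
    (hg : DifferentiableAt ℝ g x) : DifferentiableAt ℝ (fun y => f y ⬝ᵥ g y) x := by
  unfold _root_.dotProduct
  fun_prop

theorem Function.Periodic.fderiv {𝕜 E F : Type*} [NontriviallyNormedField 𝕜]
    [NormedAddCommGroup E] [NormedSpace 𝕜 E] [NormedAddCommGroup F] [NormedSpace 𝕜 F]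
    {f : E → F} {c : E} (hf : Function.Periodic f c) : Function.Periodic (fderiv 𝕜 f) c := by
  intro x
  rw [← fderiv_comp_add_right, funext hf]

theorem Fin.insertNth_one_eq_add_single {n : ℕ} (i : Fin (n + 1)) (y : Fin n → ℝ) :
    i.insertNth (α := fun _ => ℝ) 1 y = i.insertNth (α := fun _ => ℝ) 0 y + Pi.single i 1 := by
  ext m
  refine Fin.succAboveCases i ?_ (fun j => ?_) m <;> simp

theorem continuous_sum_fderiv_apply {ι E F : Type*} [Fintype ι] [NormedAddCommGroup E]
    [NormedSpace ℝ E] [NormedAddCommGroup F] [NormedSpace ℝ F] {f : ι → E → F}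
    (hf : ∀ i, ContDiff ℝ 1 (f i)) (v : ι → E) :
    Continuous fun x => ∑ i, fderiv ℝ (f i) x (v i) :=
  continuous_finsetSum _ fun i _ => ((hf i).continuous_fderiv one_ne_zero).clm_apply continuous_const

theorem integral_Icc_sum_fderiv_eq_zero_of_periodic {n : ℕ} {E : Type*} [NormedAddCommGroup E]
    [NormedSpace ℝ E] [CompleteSpace E] {f : Fin (n + 1) → (Fin (n + 1) → ℝ) → E}
    (hf : ∀ i, ContDiff ℝ 1 (f i)) (hper : ∀ i, Function.Periodic (f i) (Pi.single i 1)) :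
    ∫ x in Set.Icc 0 1, ∑ i, fderiv ℝ (f i) x (Pi.single i 1) = 0 := by
  rw [integral_divergence_of_hasFDerivAt_off_countable' 0 1 zero_le_one f
    (fun i x => fderiv ℝ (f i) x) ∅ Set.countable_empty (fun i => (hf i).continuous.continuousOn)
    (fun x _ i => ((hf i).differentiable one_ne_zero x).hasFDerivAt)
    (continuous_sum_fderiv_apply hf _).integrableOn_Icc]
  refine sum_eq_zero fun i _ => sub_eq_zero.2 (integral_congr_ae (ae_of_all _ fun y => ?_))
  simp only [Pi.one_apply, Pi.zero_apply, Fin.insertNth_one_eq_add_single, hper i _]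

theorem dot_eq_dotProduct (a b : V3) : dot a b = a ⬝ᵥ b := rfl

theorem normSq_eq_dotProduct (a : V3) : normSq a = a ⬝ᵥ a := by
  simp [normSq, dotProduct, sq]

theorem normSq_nonneg (a : V3) : 0 ≤ normSq a := sum_nonneg fun _ _ => sq_nonneg _

theorem ContDiff.pd {u : V3 → V3} (hu : ContDiff ℝ (⊤ : ℕ∞) u) (i : Fin 3) :
    ContDiff ℝ (⊤ : ℕ∞) (pd u i) :=
  (hu.fderiv_right le_rfl).clm_apply contDiff_const

theorem continuous_lap {u : V3 → V3} (hu : ContDiff ℝ (⊤ : ℕ∞) u) : Continuous (lap u) := by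
  have := fun i => ((hu.pd i).pd i).continuous
  change Continuous fun x => ∑ i, pd (pd u i) i x
  fun_prop

theorem continuous_conv {u : V3 → V3} (hu : ContDiff ℝ (⊤ : ℕ∞) u) :
    Continuous (conv u u) := by
  have := fun i => (hu.pd i).continuous
  have := hu.continuous
  unfold conv
  fun_prop

theorem IsPeriodic.periodic_single {u : V3 → V3} (hp : IsPeriodic u) (i : Fin 3) :
    Function.Periodic u (Pi.single i 1) := by
  intro x
  convert hp x (Pi.single i 1) using 3
  ext m
  by_cases h : m = i <;> simp [h]

theorem IsPeriodic.pd {u : V3 → V3} (hp : IsPeriodic u) (i : Fin 3) : IsPeriodic (pd u i) :=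
  fun x k => by
    simp only [_root_.pd, Function.Periodic.fderiv (𝕜 := ℝ) (fun y => hp y k) x]

noncomputable def energyFlux (u : V3 → V3) (i : Fin 3) (x : V3) : ℝ :=
  2 * (pd u i x ⬝ᵥ u x) - u x i * (u x ⬝ᵥ u x)

theorem contDiff_energyFlux {u : V3 → V3} (hu : ContDiff ℝ (⊤ : ℕ∞) u) (i : Fin 3) :
    ContDiff ℝ (⊤ : ℕ∞) (energyFlux u i) := by
  have := hu.pd i
  unfold energyFlux dotProduct
  fun_prop

theorem IsPeriodic.energyFlux {u : V3 → V3} (hp : IsPeriodic u) (i : Fin 3) :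
    Function.Periodic (energyFlux u i) (Pi.single i 1) := by
  intro x
  simp only [_root_.energyFlux, hp.periodic_single i x, (hp.pd i).periodic_single i x]

theorem fderiv_energyFlux_apply_single {u : V3 → V3} (hu : ContDiff ℝ (⊤ : ℕ∞) u) (i : Fin 3)
    (x : V3) :
    fderiv ℝ (energyFlux u i) x (Pi.single i 1) =
      2 * (pd (pd u i) i x ⬝ᵥ u x + pd u i x ⬝ᵥ pd u i x)
        - (pd u i x i * (u x ⬝ᵥ u x) + 2 * (u x i * (pd u i x ⬝ᵥ u x))) := by
  have hu' : Differentiable ℝ u := hu.differentiable (by simp)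
  have hpd : Differentiable ℝ (pd u i) := (hu.pd i).differentiable (by simp)
  have hui : Differentiable ℝ (fun y => u y i) := differentiable_pi.1 hu' i
  have hdir : fderiv ℝ u x (Pi.single i 1) = pd u i x := rfl
  have hdir' : fderiv ℝ (pd u i) x (Pi.single i 1) = pd (pd u i) i x := rfl
  unfold energyFlux
  rw [fderiv_fun_sub (by fun_prop) (by fun_prop), fderiv_const_mul (by fun_prop),
    fderiv_fun_mul (hui x) (by fun_prop)]
  simp only [sub_apply, add_apply, smul_apply, smul_eq_mul,
    fderiv_dotProduct_apply (hpd x) (hu' x), fderiv_dotProduct_apply (hu' x) (hu' x),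
    fderiv_apply (hu' x), ContinuousLinearMap.comp_apply, ContinuousLinearMap.proj_apply, hdir,
    hdir', dotProduct_comm (u x) (pd u i x)]
  ring

theorem sum_fderiv_energyFlux_apply_single {u : V3 → V3} (hu : ContDiff ℝ (⊤ : ℕ∞) u)
    (hdiv : IsDivFree u) (x : V3) :
    ∑ i, fderiv ℝ (energyFlux u i) x (Pi.single i 1) =
      2 * (dot (lap u x) (u x) + gradSq u x - dot (conv u u x) (u x)) := by
  have hlap : ∑ i, pd (pd u i) i x ⬝ᵥ u x = lap u x ⬝ᵥ u x := (sum_dotProduct _ _ _).symm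
  have hgrad : ∑ i, pd u i x ⬝ᵥ pd u i x = gradSq u x := by
    simp only [gradSq, normSq_eq_dotProduct]
  have hconv : ∑ i, u x i * (pd u i x ⬝ᵥ u x) = conv u u x ⬝ᵥ u x := by
    simp only [conv, sum_dotProduct, smul_dotProduct, smul_eq_mul]
  have hdiv' : ∑ i, pd u i x i * (u x ⬝ᵥ u x) = 0 := by rw [← sum_mul, hdiv x, zero_mul]
  simp only [fderiv_energyFlux_apply_single hu, sum_sub_distrib, sum_add_distrib, ← mul_sum,
    hlap, hgrad, hconv, hdiv', dot_eq_dotProduct]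
  ring

theorem two_mul_dot_tamedDrift_le_sum_fderiv_energyFlux {u : V3 → V3}
    (hu : ContDiff ℝ (⊤ : ℕ∞) u) (hdiv : IsDivFree u) {c : ℝ} (hc : 0 ≤ c) (x : V3) :
    2 * dot (lap u x - conv u u x - c • u x) (u x) ≤
      ∑ i, fderiv ℝ (energyFlux u i) x (Pi.single i 1) := by
  have hgrad : 0 ≤ gradSq u x := sum_nonneg fun i _ => normSq_nonneg _
  have hu2 : 0 ≤ c * normSq (u x) := mul_nonneg hc (normSq_nonneg _)
  rw [sum_fderiv_energyFlux_apply_single hu hdiv]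
  simp only [dot_eq_dotProduct, sub_dotProduct, smul_dotProduct, smul_eq_mul,
    ← normSq_eq_dotProduct]
  linarith

theorem IsTaming.nonneg {N : ℝ} {g : ℝ → ℝ} (hg : IsTaming N g) (r : ℝ) : 0 ≤ g r := by
  obtain ⟨hsmooth, hzero, -, _, -, hderiv⟩ := hg
  have hmono : Monotone g :=
    monotone_of_deriv_nonneg (hsmooth.differentiable (by simp)) fun r => (hderiv r).1
  rcases le_total r N with h | h
  · exact (hzero r h).ge
  · exact hzero N le_rfl ▸ hmono h

/-- `L²`-energy estimate for the tamed Navier–Stokes drift `F(u) = Δu - (u·∇)u - g_N(|u|²)u`: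
there is a constant `C_N ≥ 0`, depending only on `g_N`, with
`∫_{[0,1]³} ⟨F(u), u⟩ dx ≤ C_N ‖u‖²_{L²}` for all smooth periodic divergence-free `u`. -/
theorem tamed_drift_L2_energy_estimate (N : ℝ) (gN : ℝ → ℝ) (hg : IsTaming N gN) :
    ∃ C_N : ℝ, 0 ≤ C_N ∧ ∀ u : V3 → V3, ContDiff ℝ (⊤ : ℕ∞) u → IsPeriodic u → IsDivFree u →
      (∫ x in cube, dot (lap u x - conv u u x - gN (normSq (u x)) • u x) (u x)) ≤
        C_N * l2sq u := by
  refine ⟨0, le_rfl, fun u hu hp hdiv => ?_⟩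
  have hflux : ∀ i, ContDiff ℝ 1 (energyFlux u i) :=
    fun i => (contDiff_energyFlux hu i).of_le (by simp)
  have hcont :
      Continuous fun x => 2 * dot (lap u x - conv u u x - gN (normSq (u x)) • u x) (u x) := by
    have := continuous_lap hu
    have := continuous_conv hu
    have := hu.continuous
    have := hg.1.continuous
    unfold dot normSq
    fun_prop
  have hle := setIntegral_mono_on (μ := volume) (s := cube) hcont.integrableOn_Icc
    (continuous_sum_fderiv_apply hflux _).integrableOn_Icc measurableSet_Icc
    fun x _ => two_mul_dot_tamedDrift_le_sum_fderiv_energyFlux hu hdiv (hg.nonneg _) x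
  have hdivergence : ∫ x in cube, ∑ i, fderiv ℝ (energyFlux u i) x (Pi.single i 1) = 0 :=
    integral_Icc_sum_fderiv_eq_zero_of_periodic hflux hp.energyFlux
  rw [integral_const_mul, hdivergence] at hle
  rw [zero_mul]
  linarith
end

section
/- Let E be a real inner product space and let p ∈ ℝ with p ≥ 1. There exists a finite constant C_p > 0 such that for all x, h ∈ E: | ‖x + h‖^{2p} − ‖x‖^{2p} − 2p ‖x‖^{2(p−1)} ⟨x, h⟩ | ≤ C_p ( ‖x‖^{2(p−1)} ‖h‖² + ‖h‖^{2p} ). -/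
/-!
With `A = ‖x‖²` and `B = ‖x + h‖²` we have `B - A = 2⟪x, h⟫ + ‖h‖²`, so the quantity to bound is
`(B^p - A^p - p A^(p-1) (B - A)) + p A^(p-1) ‖h‖²`. If `‖h‖ < ‖x‖` then `0 < B ≤ 4A` and
`(B - A)² ≤ 9A‖h‖²`, so it suffices to bound the first-order remainder of `t ↦ t^p` by
`A^(p-1) (B - A)² / A`. After scaling to `A = 1`, the tangent inequality at `y = B/A` bounds the
remainder by `p (y - 1)(y^(p-1) - 1)`, and `y^(p-1)` lies between `1` and `y^n` for any integer
`n ≥ p - 1`, which reduces everything to the polynomial `y^n - 1 = (y - 1)(1 + ⋯ + y^(n-1))`.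
If `‖x‖ ≤ ‖h‖`, every term is crudely bounded by `‖h‖^(2p)` or `‖x‖^(2(p-1)) ‖h‖²`.
-/

open RealInnerProductSpace

namespace Real

variable {p y M : ℝ}

theorem rpow_two_mul {x : ℝ} (hx : 0 ≤ x) (q : ℝ) : x ^ (2 * q) = (x ^ 2) ^ q := by
  simpa using rpow_natCast_mul hx 2 q

theorem rpow_sub_one_le_mul_rpow_sub_one (hp : 1 ≤ p) (hy : 0 < y) :
    y ^ p - 1 ≤ p * y ^ (p - 1) * (y - 1) := by
  have hb := one_add_mul_self_le_rpow_one_add (s := y⁻¹ - 1) (by linarith [inv_pos.2 hy]) hp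
  rw [add_sub_cancel, inv_rpow hy.le] at hb
  have hyp : 0 < y ^ p := rpow_pos_of_pos hy p
  have h := mul_le_mul_of_nonneg_left hb hyp.le
  rw [mul_inv_cancel₀ hyp.ne'] at h
  rw [rpow_sub_one hy.ne', div_eq_mul_inv]
  linear_combination h - p * y ^ p * mul_inv_cancel₀ hy.ne'

theorem sub_one_mul_rpow_sub_one_le {q : ℝ} {n : ℕ} (hy : 0 < y) (hqn : q ≤ n) :
    (y - 1) * (y ^ q - 1) ≤ (y - 1) * (y ^ n - 1) := by
  rw [← rpow_natCast]
  rcases le_total 1 y with h | h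
  · exact mul_le_mul_of_nonneg_left (by gcongr) (sub_nonneg.2 h)
  · exact mul_le_mul_of_nonpos_left (sub_le_sub_right (rpow_le_rpow_of_exponent_ge hy h hqn) 1)
      (sub_nonpos.2 h)

theorem sub_one_mul_pow_sub_one_le (hy : 0 ≤ y) (hyM : y ≤ M) (hM : 1 ≤ M) (n : ℕ) :
    (y - 1) * (y ^ n - 1) ≤ n * M ^ (n - 1) * (y - 1) ^ 2 := by
  have h := abs_pow_sub_pow_le y 1 n
  rw [one_pow, abs_one, abs_of_nonneg hy] at h
  calc (y - 1) * (y ^ n - 1) ≤ |y - 1| * |y ^ n - 1| := by rw [← abs_mul]; exact le_abs_self _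
    _ ≤ |y - 1| * (|y - 1| * n * M ^ (n - 1)) := by
        gcongr; exact h.trans (by gcongr; exact max_le hyM hM)
    _ = n * M ^ (n - 1) * (y - 1) ^ 2 := by rw [← sq_abs (y - 1)]; ring

theorem rpow_sub_one_sub_mul_le (hp : 1 ≤ p) (hy : 0 < y) (hyM : y ≤ M) (hM : 1 ≤ M) :
    y ^ p - 1 - p * (y - 1) ≤ p * ⌈p⌉₊ * M ^ (⌈p⌉₊ - 1) * (y - 1) ^ 2 := by
  have hp0 : 0 ≤ p := by linarith
  calc y ^ p - 1 - p * (y - 1) ≤ p * ((y - 1) * (y ^ (p - 1) - 1)) := by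
        linarith [rpow_sub_one_le_mul_rpow_sub_one hp hy]
    _ ≤ p * ((y - 1) * (y ^ ⌈p⌉₊ - 1)) :=
        mul_le_mul_of_nonneg_left (sub_one_mul_rpow_sub_one_le hy (by linarith [Nat.le_ceil p])) hp0
    _ ≤ p * (⌈p⌉₊ * M ^ (⌈p⌉₊ - 1) * (y - 1) ^ 2) :=
        mul_le_mul_of_nonneg_left (sub_one_mul_pow_sub_one_le hy.le hyM hM _) hp0
    _ = p * ⌈p⌉₊ * M ^ (⌈p⌉₊ - 1) * (y - 1) ^ 2 := by ring

theorem abs_rpow_sub_rpow_sub_mul_le {A B : ℝ} (hp : 1 ≤ p) (hA : 0 < A) (hB : 0 < B)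
    (hBA : B ≤ M * A) (hM : 1 ≤ M) :
    |B ^ p - A ^ p - p * A ^ (p - 1) * (B - A)| ≤
      p * ⌈p⌉₊ * M ^ (⌈p⌉₊ - 1) * A ^ (p - 1) * ((B - A) ^ 2 / A) := by
  set y := B / A with hy_def
  have hB_eq : B = A * y := by rw [hy_def, mul_div_cancel₀ _ hA.ne']
  have hy : 0 < y := div_pos hB hA
  have hyM : y ≤ M := (div_le_iff₀ hA).2 hBA
  have hAp : A ^ p = A ^ (p - 1) * A := by rw [← rpow_add_one hA.ne', sub_add_cancel]
  have h_eq : B ^ p - A ^ p - p * A ^ (p - 1) * (B - A) =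
      A ^ (p - 1) * A * (y ^ p - 1 - p * (y - 1)) := by
    rw [hB_eq, mul_rpow hA.le hy.le, hAp]; ring
  have h_sq : (B - A) ^ 2 / A = A * (y - 1) ^ 2 := by
    rw [hB_eq]; field_simp
  have h_nonneg : 0 ≤ y ^ p - 1 - p * (y - 1) := by
    have := one_add_mul_self_le_rpow_one_add (s := y - 1) (by linarith) hp
    rw [add_sub_cancel] at this
    linarith
  rw [h_eq, h_sq, abs_of_nonneg (by positivity)]
  calc A ^ (p - 1) * A * (y ^ p - 1 - p * (y - 1))
      ≤ A ^ (p - 1) * A * (p * ⌈p⌉₊ * M ^ (⌈p⌉₊ - 1) * (y - 1) ^ 2) := by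
        gcongr; exact rpow_sub_one_sub_mul_le hp hy hyM hM
    _ = _ := by ring

end Real

open Real

section

variable {E : Type*} [NormedAddCommGroup E] [InnerProductSpace ℝ E]

noncomputable def normRpowRemainder (p : ℝ) (x h : E) : ℝ :=
  ‖x + h‖ ^ (2 * p) - ‖x‖ ^ (2 * p) - 2 * p * ‖x‖ ^ (2 * (p - 1)) * ⟪x, h⟫

theorem abs_normRpowRemainder_le_of_norm_le {p : ℝ} (hp : 0 ≤ p) {x h : E} (hxh : ‖x‖ ≤ ‖h‖) :
    |normRpowRemainder p x h| ≤
      (4 ^ p + 1) * ‖h‖ ^ (2 * p) + 2 * p * ‖x‖ ^ (2 * (p - 1)) * ‖h‖ ^ 2 := by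
  have hxh_norm : ‖x + h‖ ^ (2 * p) ≤ 4 ^ p * ‖h‖ ^ (2 * p) :=
    calc ‖x + h‖ ^ (2 * p) ≤ (2 * ‖h‖) ^ (2 * p) := by
          gcongr; linarith [norm_add_le x h]
      _ = 4 ^ p * ‖h‖ ^ (2 * p) := by
          rw [mul_rpow zero_le_two (norm_nonneg h), rpow_two_mul zero_le_two]; norm_num
  have hx_norm : ‖x‖ ^ (2 * p) ≤ ‖h‖ ^ (2 * p) := by gcongr
  have hinner : |⟪x, h⟫| ≤ ‖h‖ ^ 2 :=
    (abs_real_inner_le_norm x h).trans (by nlinarith [norm_nonneg x])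
  calc |normRpowRemainder p x h|
      ≤ |‖x + h‖ ^ (2 * p)| + |‖x‖ ^ (2 * p)| + |2 * p * ‖x‖ ^ (2 * (p - 1)) * ⟪x, h⟫| :=
        (abs_sub _ _).trans (by gcongr; exact abs_sub _ _)
    _ = ‖x + h‖ ^ (2 * p) + ‖x‖ ^ (2 * p) + 2 * p * ‖x‖ ^ (2 * (p - 1)) * |⟪x, h⟫| := by
        rw [abs_mul, abs_of_nonneg (by positivity), abs_of_nonneg (by positivity),
          abs_of_nonneg (by positivity)]
    _ ≤ 4 ^ p * ‖h‖ ^ (2 * p) + ‖h‖ ^ (2 * p) + 2 * p * ‖x‖ ^ (2 * (p - 1)) * ‖h‖ ^ 2 := by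
        gcongr
    _ = _ := by ring

theorem abs_normRpowRemainder_le_of_norm_lt {p : ℝ} (hp : 1 ≤ p) {x h : E} (hhx : ‖h‖ < ‖x‖) :
    |normRpowRemainder p x h| ≤
      (9 * (p * ⌈p⌉₊ * 4 ^ (⌈p⌉₊ - 1)) + p) * ‖x‖ ^ (2 * (p - 1)) * ‖h‖ ^ 2 := by
  have hb := norm_nonneg h
  have ha : 0 < ‖x‖ := hb.trans_lt hhx
  set A := ‖x‖ ^ 2 with hA_def
  set B := ‖x + h‖ ^ 2 with hB_def
  have hA : 0 < A := by positivity
  have hB : 0 < B := pow_pos (by linarith [norm_sub_le_norm_add x h]) 2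
  have hBA : B - A = 2 * ⟪x, h⟫ + ‖h‖ ^ 2 := by rw [hB_def, hA_def, norm_add_sq_real]; ring
  have hBA_abs : |B - A| ≤ 3 * ‖x‖ * ‖h‖ := by
    have := abs_le.1 (abs_real_inner_le_norm x h)
    rw [hBA, abs_le]; constructor <;> nlinarith
  have hB4 : B ≤ 4 * A := by nlinarith [le_abs_self (B - A)]
  have hsq : (B - A) ^ 2 / A ≤ 9 * ‖h‖ ^ 2 := by
    rw [div_le_iff₀ hA, ← sq_abs]
    calc |B - A| ^ 2 ≤ (3 * ‖x‖ * ‖h‖) ^ 2 := by gcongr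
      _ = 9 * ‖h‖ ^ 2 * A := by ring
  have h_eq : normRpowRemainder p x h =
      (B ^ p - A ^ p - p * A ^ (p - 1) * (B - A)) + p * A ^ (p - 1) * ‖h‖ ^ 2 := by
    rw [normRpowRemainder, rpow_two_mul (norm_nonneg _), rpow_two_mul (norm_nonneg _),
      rpow_two_mul (norm_nonneg _)]
    linear_combination p * A ^ (p - 1) * hBA
  rw [h_eq, rpow_two_mul (norm_nonneg x)]
  calc _ ≤ |B ^ p - A ^ p - p * A ^ (p - 1) * (B - A)| + p * A ^ (p - 1) * ‖h‖ ^ 2 :=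
        (abs_add_le _ _).trans_eq (congrArg _ (abs_of_nonneg (by positivity)))
    _ ≤ p * ⌈p⌉₊ * 4 ^ (⌈p⌉₊ - 1) * A ^ (p - 1) * ((B - A) ^ 2 / A) +
          p * A ^ (p - 1) * ‖h‖ ^ 2 := by
        gcongr; exact abs_rpow_sub_rpow_sub_mul_le hp hA hB hB4 (by norm_num)
    _ ≤ p * ⌈p⌉₊ * 4 ^ (⌈p⌉₊ - 1) * A ^ (p - 1) * (9 * ‖h‖ ^ 2) + p * A ^ (p - 1) * ‖h‖ ^ 2 := by
        gcongr
    _ = _ := by ring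

end

/-- Taylor-formula estimate: for a real inner product space `E` and `p ≥ 1` there is a
finite constant `C_p > 0` with
`|‖x+h‖^{2p} − ‖x‖^{2p} − 2p‖x‖^{2(p−1)}⟨x,h⟩| ≤ C_p(‖x‖^{2(p−1)}‖h‖² + ‖h‖^{2p})`. -/
theorem taylor_pow_estimate {E : Type*} [NormedAddCommGroup E] [InnerProductSpace ℝ E]
    (p : ℝ) (hp : 1 ≤ p) :
    ∃ C : ℝ, 0 < C ∧ ∀ x h : E,
      |‖x + h‖ ^ (2 * p) - ‖x‖ ^ (2 * p) - 2 * p * ‖x‖ ^ (2 * (p - 1)) * ⟪x, h⟫| ≤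
        C * (‖x‖ ^ (2 * (p - 1)) * ‖h‖ ^ (2 : ℝ) + ‖h‖ ^ (2 * p)) := by
  have hp0 : 0 ≤ p := by linarith
  have hK : 0 ≤ p * ⌈p⌉₊ * 4 ^ (⌈p⌉₊ - 1) := by positivity
  refine ⟨4 ^ p + 1 + 3 * p + 9 * (p * ⌈p⌉₊ * 4 ^ (⌈p⌉₊ - 1)), by positivity, fun x h => ?_⟩
  have hu : 0 ≤ ‖x‖ ^ (2 * (p - 1)) * ‖h‖ ^ 2 := by positivity
  have hv : 0 ≤ ‖h‖ ^ (2 * p) := by positivity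
  have h4p : 0 < (4 : ℝ) ^ p := by positivity
  rw [rpow_two]
  change |normRpowRemainder p x h| ≤ _
  rcases le_or_gt ‖x‖ ‖h‖ with hxh | hhx
  · grw [abs_normRpowRemainder_le_of_norm_le hp0 hxh]
    nlinarith
  · grw [abs_normRpowRemainder_le_of_norm_lt hp hhx]
    nlinarith
end

section
/- Let h : [0,T] × Z → ℝ be measurable with ∫_{[0,T]×Z} |h|² dϑ_T < ∞, and such that for every δ > 0 and every measurable E ⊆ [0,T] × Z with ϑ_T(E) < ∞ one has ∫_E exp(δ |h(s,z)|) dϑ_T < ∞. Fix M > 0. Then for every ε > 0 there exists a compact set K_ε ⊆ Z such that sup_{g ∈ S^M} ∫_0^T ∫_{Z \ K_ε} |h(s,z)| |g(s,z) − 1| ϑ(dz) ds ≤ ε. -/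
open MeasureTheory

noncomputable section

variable {Z : Type*} [TopologicalSpace Z] [PolishSpace Z] [LocallyCompactSpace Z]
  [MeasurableSpace Z] [BorelSpace Z]

/-- `l(r) = r log r − r + 1` (with `l(0) = 1`, since `Real.log 0 = 0`). -/
def ell (r : ℝ) : ℝ := r * Real.log r - r + 1

/-- The measure `ϑ_T = λ_T ⊗ ϑ` on `[0,T] × Z` (realized on `ℝ × Z` with Lebesgue measure
restricted to `[0,T]` in the first coordinate). -/
def thetaT (T : ℝ) (ϑ : Measure Z) : Measure (ℝ × Z) :=
  (volume.restrict (Set.Icc 0 T)).prod ϑ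

/-- `S^M`: the set of nonnegative measurable functions `g` on `[0,T] × Z` with
`∫ l(g) dϑ_T ≤ M`. -/
def SM (T : ℝ) (ϑ : Measure Z) (M : ℝ) : Set (ℝ × Z → ℝ) :=
  {g | Measurable g ∧ (∀ p, 0 ≤ g p) ∧
    ∫⁻ p, ENNReal.ofReal (ell (g p)) ∂(thetaT T ϑ) ≤ ENNReal.ofReal M}

end

/-!
For `a, b ≥ 0` and `δ > 0` one has `a |b - 1| ≤ a² / (2δ) + 1_{a > δ} δ e^{a/δ} + 20 δ ℓ(b)`:
by AM–GM when `b ≤ 2`, and for `b > 2` either `a ≤ δ` and `b ≤ 20 ℓ(b)`, or `a > δ` and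
`ab ≤ δ (e^{a/δ} + ℓ(b))` by Fenchel–Young. Integrated against `g ∈ S^M`, the `ℓ`-term is at most
`20 δ M` uniformly in `g`; the other two terms do not involve `g` and are integrable by the
hypotheses on `h` (`{|h| > δ}` has finite measure by Chebyshev). Pushed forward to the Polish
space `Z`, the finite measure they define is tight, which yields the compact set.
-/

open scoped ENNReal

lemma sq_sqrt_sub_one_le_ell {r : ℝ} (hr : 0 ≤ r) : (√r - 1) ^ 2 ≤ ell r := by
  rcases hr.eq_or_lt with rfl | hr
  · simp [ell]
  set t := √r
  have ht : 0 < t := Real.sqrt_pos.2 hr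
  have hlog : 1 - t⁻¹ ≤ Real.log t := Real.one_sub_inv_le_log_of_pos ht
  have htlog : t - 1 ≤ t * Real.log t := by
    have := mul_le_mul_of_nonneg_left hlog ht.le
    rwa [mul_sub, mul_one, mul_inv_cancel₀ ht.ne'] at this
  rw [ell, ← Real.sq_sqrt hr.le, Real.log_pow]
  push_cast
  nlinarith [mul_nonneg ht.le (by linarith : (0 : ℝ) ≤ t * Real.log t - t + 1)]

lemma ell_nonneg {r : ℝ} (hr : 0 ≤ r) : 0 ≤ ell r :=
  (sq_nonneg _).trans (sq_sqrt_sub_one_le_ell hr)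

lemma mul_le_exp_add_ell (a : ℝ) {b : ℝ} (hb : 0 ≤ b) : a * b ≤ Real.exp a + ell b := by
  rcases hb.eq_or_lt with rfl | hb
  · simp only [ell, mul_zero, zero_mul, sub_zero, zero_add]
    positivity
  have h := Real.add_one_le_exp (a - Real.log b)
  rw [Real.exp_sub, Real.exp_log hb, le_div_iff₀ hb] at h
  rw [ell]
  nlinarith

lemma le_twenty_mul_ell {b : ℝ} (hb : 2 ≤ b) : b ≤ 20 * ell b := by
  have hb0 : 0 ≤ b := by linarith
  have ht : (1.41 : ℝ) ≤ √b := Real.le_sqrt_of_sq_le (by linarith)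
  nlinarith [sq_sqrt_sub_one_le_ell hb0, Real.sq_sqrt hb0, sq_nonneg (√b - 1.41)]

lemma sq_sub_one_le_seven_mul_ell {b : ℝ} (hb0 : 0 ≤ b) (hb : b ≤ 2) :
    (b - 1) ^ 2 ≤ 7 * ell b := by
  have hsq : √b ^ 2 = b := Real.sq_sqrt hb0
  have ht0 : 0 ≤ √b := Real.sqrt_nonneg b
  have hfactor : (b - 1) ^ 2 = (√b - 1) ^ 2 * (√b + 1) ^ 2 := by
    linear_combination (2 - b - √b ^ 2) * hsq
  have hbound : (√b + 1) ^ 2 ≤ 7 := by nlinarith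
  rw [hfactor, mul_comm 7]
  exact mul_le_mul (sq_sqrt_sub_one_le_ell hb0) hbound (sq_nonneg _) (ell_nonneg hb0)

noncomputable def tailWeight (δ a : ℝ) : ℝ :=
  (2 * δ)⁻¹ * a ^ 2 + if δ < a then δ * Real.exp (δ⁻¹ * a) else 0

lemma tailWeight_nonneg {δ : ℝ} (hδ : 0 < δ) (a : ℝ) : 0 ≤ tailWeight δ a := by
  unfold tailWeight
  split_ifs <;> positivity

lemma mul_abs_sub_one_le_tailWeight_add {δ a b : ℝ} (hδ : 0 < δ) (ha : 0 ≤ a) (hb : 0 ≤ b) :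
    a * |b - 1| ≤ tailWeight δ a + 20 * δ * ell b := by
  have hell : 0 ≤ ell b := ell_nonneg hb
  have htail : (0 : ℝ) ≤ if δ < a then δ * Real.exp (δ⁻¹ * a) else 0 := by
    split_ifs <;> positivity
  unfold tailWeight
  rcases le_or_gt |b - 1| 1 with hb1 | hb1
  · have hb2 : b ≤ 2 := by linarith [(abs_le.1 hb1).2]
    have hamgm : a * |b - 1| ≤ (2 * δ)⁻¹ * a ^ 2 + δ / 2 * (b - 1) ^ 2 := by
      rw [← sq_abs (b - 1)]
      have := sq_nonneg (a - δ * |b - 1|)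
      rw [← sub_nonneg]
      field_simp
      nlinarith
    nlinarith [sq_sub_one_le_seven_mul_ell hb hb2]
  have hb2 : 2 < b := by
    rcases lt_abs.1 hb1 with h | h <;> linarith
  have hab : a * |b - 1| ≤ a * b := by
    rw [abs_of_pos (by linarith)]
    nlinarith
  have hsq : 0 ≤ (2 * δ)⁻¹ * a ^ 2 := by positivity
  split_ifs with hδa
  · have := mul_le_exp_add_ell (δ⁻¹ * a) hb
    have hscale : a * b = δ * (δ⁻¹ * a * b) := by field_simp
    nlinarith
  · nlinarith [le_twenty_mul_ell hb2.le]

section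

variable {X : Type*} [MeasurableSpace X]

lemma measure_setOf_lt_abs_lt_top {μ : Measure X} {f : X → ℝ}
    (hf : Measurable f) (hL2 : ∫⁻ x, ENNReal.ofReal (|f x| ^ 2) ∂μ < ⊤) {c : ℝ} (hc : 0 < c) :
    μ {x | c < |f x|} < ⊤ := by
  have hc2 : ENNReal.ofReal (c ^ 2) ≠ 0 := (ENNReal.ofReal_pos.2 (by positivity)).ne'
  calc μ {x | c < |f x|} ≤ μ {x | ENNReal.ofReal (c ^ 2) ≤ ENNReal.ofReal (|f x| ^ 2)} :=
        measure_mono fun x hx => ENNReal.ofReal_le_ofReal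
          (pow_le_pow_left₀ hc.le hx.le 2)
    _ ≤ (∫⁻ x, ENNReal.ofReal (|f x| ^ 2) ∂μ) / ENNReal.ofReal (c ^ 2) :=
        meas_ge_le_lintegral_div (hf.abs.pow_const 2).ennreal_ofReal.aemeasurable hc2
          ENNReal.ofReal_ne_top
    _ < ⊤ := ENNReal.div_lt_top hL2.ne hc2

lemma lintegral_tailWeight_lt_top {μ : Measure X} {f : X → ℝ}
    (hf : Measurable f) {δ : ℝ} (hδ : 0 < δ) (hL2 : ∫⁻ x, ENNReal.ofReal (|f x| ^ 2) ∂μ < ⊤)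
    (hexp : ∫⁻ x in {x | δ < |f x|}, ENNReal.ofReal (Real.exp (δ⁻¹ * |f x|)) ∂μ < ⊤) :
    ∫⁻ x, ENNReal.ofReal (tailWeight δ |f x|) ∂μ < ⊤ := by
  set E := {x | δ < |f x|}
  have hE : MeasurableSet E := measurableSet_lt measurable_const hf.abs
  have hsplit : ∀ x, ENNReal.ofReal (tailWeight δ |f x|) ≤
      ENNReal.ofReal (2 * δ)⁻¹ * ENNReal.ofReal (|f x| ^ 2) +
        E.indicator (fun x => ENNReal.ofReal δ * ENNReal.ofReal (Real.exp (δ⁻¹ * |f x|))) x := by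
    intro x
    refine ENNReal.ofReal_add_le.trans (add_le_add (ENNReal.ofReal_mul (by positivity)).le ?_)
    by_cases hx : x ∈ E
    · rw [if_pos (show δ < |f x| from hx), Set.indicator_of_mem hx, ENNReal.ofReal_mul hδ.le]
    · rw [if_neg (show ¬δ < |f x| from hx), Set.indicator_of_notMem hx, ENNReal.ofReal_zero]
  calc _ ≤ _ := lintegral_mono hsplit
    _ = ENNReal.ofReal (2 * δ)⁻¹ * ∫⁻ x, ENNReal.ofReal (|f x| ^ 2) ∂μ +
          ENNReal.ofReal δ * ∫⁻ x in E, ENNReal.ofReal (Real.exp (δ⁻¹ * |f x|)) ∂μ := by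
        rw [lintegral_add_left ((hf.abs.pow_const 2).ennreal_ofReal.const_mul _),
          lintegral_const_mul' _ _ ENNReal.ofReal_ne_top, lintegral_indicator hE,
          lintegral_const_mul' _ _ ENNReal.ofReal_ne_top]
    _ < ⊤ := ENNReal.add_lt_top.2
        ⟨ENNReal.mul_lt_top ENNReal.ofReal_lt_top hL2, ENNReal.mul_lt_top ENNReal.ofReal_lt_top hexp⟩

lemma setLIntegral_mul_abs_sub_one_le (μ : Measure X)
    (s : Set X) (f : X → ℝ) {g : X → ℝ} (hg : Measurable g) (hg0 : ∀ x, 0 ≤ g x) {δ : ℝ}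
    (hδ : 0 < δ) :
    ∫⁻ x in s, ENNReal.ofReal (|f x| * |g x - 1|) ∂μ ≤
      ∫⁻ x in s, ENNReal.ofReal (tailWeight δ |f x|) ∂μ +
        ENNReal.ofReal (20 * δ) * ∫⁻ x, ENNReal.ofReal (ell (g x)) ∂μ := by
  have hell : Measurable fun x => ENNReal.ofReal (ell (g x)) :=
    (((hg.mul (Real.measurable_log.comp hg)).sub hg).add_const 1).ennreal_ofReal
  calc ∫⁻ x in s, ENNReal.ofReal (|f x| * |g x - 1|) ∂μ
      ≤ ∫⁻ x in s, (ENNReal.ofReal (tailWeight δ |f x|) +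
          ENNReal.ofReal (20 * δ) * ENNReal.ofReal (ell (g x))) ∂μ := by
        refine lintegral_mono fun x => ?_
        rw [← ENNReal.ofReal_mul (by positivity),
          ← ENNReal.ofReal_add (tailWeight_nonneg hδ _) (by have := ell_nonneg (hg0 x); positivity)]
        exact ENNReal.ofReal_le_ofReal
          (mul_abs_sub_one_le_tailWeight_add hδ (abs_nonneg _) (hg0 x))
    _ ≤ _ := by
        rw [lintegral_add_right _ (hell.const_mul _), lintegral_const_mul _ hell]
        gcongr
        exact Measure.restrict_le_self

lemma exists_isCompact_setLIntegral_univ_prod_compl_le {Z : Type*} [TopologicalSpace Z] [PolishSpace Z] [MeasurableSpace Z] [BorelSpace Z]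
    (μ : Measure (X × Z)) {F : X × Z → ℝ≥0∞} (hF : ∫⁻ p, F p ∂μ ≠ ⊤) {η : ℝ≥0∞} (hη : 0 < η) :
    ∃ K : Set Z, IsCompact K ∧ ∫⁻ p in Set.univ ×ˢ Kᶜ, F p ∂μ ≤ η := by
  set ν := (μ.withDensity F).map Prod.snd
  have : IsFiniteMeasure ν := by
    refine ⟨?_⟩
    rw [Measure.map_apply measurable_snd MeasurableSet.univ, Set.preimage_univ,
      withDensity_apply _ MeasurableSet.univ, Measure.restrict_univ]
    exact hF.lt_top
  obtain ⟨K, hK, hνK⟩ :=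
    isTightMeasureSet_iff_exists_isCompact_measure_compl_le.1 (isTightMeasureSet_singleton (μ := ν))
      η hη
  refine ⟨K, hK, ?_⟩
  have hKc : MeasurableSet (Set.univ ×ˢ Kᶜ : Set (X × Z)) :=
    MeasurableSet.univ.prod hK.isClosed.measurableSet.compl
  rw [← withDensity_apply _ hKc, Set.univ_prod, ← Measure.map_apply measurable_snd
    hK.isClosed.measurableSet.compl]
  exact hνK ν rfl

end

theorem sup_SM_integral_outside_compact_small_general {Z : Type*} [TopologicalSpace Z] [PolishSpace Z]
    [MeasurableSpace Z] [BorelSpace Z]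
    (T : ℝ) (ϑ : Measure Z)
    (h : ℝ × Z → ℝ) (hmeas : Measurable h)
    (hL2 : ∫⁻ p, ENNReal.ofReal (|h p| ^ 2) ∂(thetaT T ϑ) < ⊤)
    (hexp : ∀ δ : ℝ, 0 < δ → ∀ E : Set (ℝ × Z), MeasurableSet E → thetaT T ϑ E < ⊤ →
      ∫⁻ p in E, ENNReal.ofReal (Real.exp (δ * |h p|)) ∂(thetaT T ϑ) < ⊤)
    (M : ℝ) (hM : 0 < M) (ε : ℝ) (hε : 0 < ε) :
    ∃ K : Set Z, IsCompact K ∧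
      (⨆ g ∈ SM T ϑ M,
        ∫⁻ p in (Set.univ : Set ℝ) ×ˢ Kᶜ, ENNReal.ofReal (|h p| * |g p - 1|) ∂(thetaT T ϑ)) ≤
        ENNReal.ofReal ε := by
  set δ := ε / (40 * M)
  have hδ : 0 < δ := by positivity
  have htail : ∫⁻ p, ENNReal.ofReal (tailWeight δ |h p|) ∂(thetaT T ϑ) < ⊤ :=
    lintegral_tailWeight_lt_top hmeas hδ hL2 <| hexp δ⁻¹ (inv_pos.2 hδ) _
      (measurableSet_lt measurable_const hmeas.abs) (measure_setOf_lt_abs_lt_top hmeas hL2 hδ)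
  obtain ⟨K, hK, hKtail⟩ := exists_isCompact_setLIntegral_univ_prod_compl_le _ htail.ne
    (ENNReal.ofReal_pos.2 (half_pos hε))
  refine ⟨K, hK, iSup₂_le fun g ⟨hg, hg0, hgM⟩ => ?_⟩
  calc _ ≤ _ := setLIntegral_mul_abs_sub_one_le _ _ h hg hg0 hδ
    _ ≤ ENNReal.ofReal (ε / 2) + ENNReal.ofReal (20 * δ) * ENNReal.ofReal M := by gcongr
    _ = ENNReal.ofReal ε := by
        rw [← ENNReal.ofReal_mul (by positivity), ← ENNReal.ofReal_add (by positivity)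
          (by positivity)]
        congr 1
        simp only [δ]
        field_simp
        ring

/-- Uniform tightness in the `Z` variable over `S^M` (Lemma 4.4 (2) of the paper):
for every `ε > 0` there is a compact `K_ε ⊆ Z` such that
`sup_{g ∈ S^M} ∫_0^T ∫_{Z \ K_ε} |h| |g − 1| dϑ ds ≤ ε`. -/
theorem sup_SM_integral_outside_compact_small {Z : Type*} [TopologicalSpace Z] [PolishSpace Z]
    [LocallyCompactSpace Z] [MeasurableSpace Z] [BorelSpace Z]
    (T : ℝ) (hT : 0 < T) (ϑ : Measure Z) [SigmaFinite ϑ] [IsFiniteMeasureOnCompacts ϑ]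
    (h : ℝ × Z → ℝ) (hmeas : Measurable h)
    (hL2 : ∫⁻ p, ENNReal.ofReal (|h p| ^ 2) ∂(thetaT T ϑ) < ⊤)
    (hexp : ∀ δ : ℝ, 0 < δ → ∀ E : Set (ℝ × Z), MeasurableSet E → thetaT T ϑ E < ⊤ →
      ∫⁻ p in E, ENNReal.ofReal (Real.exp (δ * |h p|)) ∂(thetaT T ϑ) < ⊤)
    (M : ℝ) (hM : 0 < M) (ε : ℝ) (hε : 0 < ε) :
    ∃ K : Set Z, IsCompact K ∧
      (⨆ g ∈ SM T ϑ M,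
        ∫⁻ p in (Set.univ : Set ℝ) ×ˢ Kᶜ, ENNReal.ofReal (|h p| * |g p - 1|) ∂(thetaT T ϑ)) ≤
        ENNReal.ofReal ε :=
  sup_SM_integral_outside_compact_small_general T ϑ h hmeas hL2 hexp M hM ε hε
end

section
/- Let T > 0, p ∈ (1,∞) and α ∈ (0,1). Let B₀, B, B₁ be real Banach spaces, with B₀ and B₁ reflexive (the canonical embedding of each into its double dual is surjective). Let j₀ : B₀ → B and j₁ : B → B₁ be injective continuous linear maps, and assume j₀ is a compact operator (it maps bounded sets to relatively compact sets). Then for every sequence (u_n) of strongly measurable functions u_n : [0,T] → B₀ satisfying sup_n [ ∫_0^T ‖u_n(t)‖_{B₀}^p dt + ∫_0^T ∫_0^T ‖j₁(j₀(u_n(t))) − j₁(j₀(u_n(s)))‖_{B₁}^p / |t − s|^{1+αp} dt ds ] < ∞, there exist a subsequence (u_{n_k}) and a strongly measurable v : [0,T] → B with ∫_0^T ‖v(t)‖_B^p dt < ∞ such that ∫_0^T ‖j₀(u_{n_k}(t)) − v(t)‖_B^p dt → 0 as k → ∞. That is, the embedding of L^p([0,T];B₀) ∩ W^{α,p}([0,T];B₁)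 into L^p([0,T];B) is compact. -/
/-!
Cut `[0, T)` into `N` intervals of length `h = T / N` and let `P_h` replace a function by its
mean on each interval. By Jensen's inequality `P_h` is a contraction of `L^p`, and the
fractional seminorm controls the error of the approximation:
`‖g - P_h g‖_{L^p} ≤ h^α [g]_{W^{α,p}}`. Ehrling's inequality
`‖j₀ x‖ ≤ ε ‖x‖ + c_ε ‖j₁ (j₀ x)‖`, which follows from the compactness of `j₀` and the injectivity
of `j₁`, transfers this estimate from `B₁` to `B`: every `j₀ ∘ u_n` lies within
`O(ε + c_ε h^α)` of `j₀ ∘ P_h u_n`. These are step functions on `N` intervals with values in the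
compact set `closure (j₀ '' ball)`, so they lie in a compact subset of `L^p(0, T; B)`. Hence the
sequence `j₀ ∘ u_n` is totally bounded in the complete space `L^p(0, T; B)`, and a subsequence
converges.
-/

open MeasureTheory Filter Set
open scoped ENNReal Topology

section LpAverages

variable {α E F G : Type*} [MeasurableSpace α] {μ : Measure α}
  [NormedAddCommGroup E] [NormedAddCommGroup F] [NormedAddCommGroup G]

theorem ofReal_norm_rpow (x : E) {p : ℝ} (hp : 0 ≤ p) :
    ENNReal.ofReal (‖x‖ ^ p) = ‖x‖ₑ ^ p := by
  rw [← ENNReal.ofReal_rpow_of_nonneg (norm_nonneg x) hp, ofReal_norm]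

theorem eLpNorm_ofReal_eq_lintegral_rpow (f : α → E) {p : ℝ} (hp : 0 < p) :
    eLpNorm f (ENNReal.ofReal p) μ = (∫⁻ a, ‖f a‖ₑ ^ p ∂μ) ^ (1 / p) := by
  rw [eLpNorm_eq_lintegral_rpow_enorm_toReal (by simpa using hp) ENNReal.ofReal_ne_top,
    ENNReal.toReal_ofReal hp.le]

theorem eLpNorm_ofReal_le_of_lintegral_rpow_le {f : α → E} {p : ℝ} (hp : 0 < p) {C : ℝ≥0∞}
    (hC : ∫⁻ a, ‖f a‖ₑ ^ p ∂μ ≤ C) : eLpNorm f (ENNReal.ofReal p) μ ≤ C ^ (1 / p) := by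
  rw [eLpNorm_ofReal_eq_lintegral_rpow f hp]
  exact ENNReal.rpow_le_rpow hC (by positivity)

theorem lintegral_rpow_enorm_eq_eLpNorm_rpow (f : α → E) {p : ℝ} (hp : 0 < p) :
    ∫⁻ a, ‖f a‖ₑ ^ p ∂μ = eLpNorm f (ENNReal.ofReal p) μ ^ p := by
  rw [eLpNorm_ofReal_eq_lintegral_rpow f hp, ← ENNReal.rpow_mul, one_div_mul_cancel hp.ne',
    ENNReal.rpow_one]

theorem edist_toLp_eq_eLpNorm_sub {p : ℝ≥0∞} {f : α → E} (hf : MemLp f p μ) (G : Lp E p μ) :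
    edist (hf.toLp f) G = eLpNorm (fun a => f a - G a) p μ := by
  rw [Lp.edist_def]
  exact eLpNorm_congr_ae (hf.coeFn_toLp.sub .rfl)

theorem enorm_average_rpow_le_laverage [NormedSpace ℝ E] [IsFiniteMeasure μ] (f : α → E)
    {p : ℝ} (hp : 1 ≤ p) : ‖⨍ a, f a ∂μ‖ₑ ^ p ≤ ⨍⁻ a, ‖f a‖ₑ ^ p ∂μ := by
  have hp0 : 0 < p := by linarith
  rcases eq_zero_or_neZero μ with rfl | _
  · simp [hp0]
  set ν := (μ univ)⁻¹ • μ
  rw [average_eq', laverage_eq']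
  by_cases hf : Integrable f ν
  swap
  · rw [integral_undef hf, enorm_zero, ENNReal.zero_rpow_of_pos hp0]
    exact zero_le
  have hJensen : ‖∫ a, f a ∂ν‖ₑ ≤ eLpNorm f (ENNReal.ofReal p) ν :=
    calc ‖∫ a, f a ∂ν‖ₑ ≤ eLpNorm f 1 ν :=
          (enorm_integral_le_lintegral_enorm _).trans_eq eLpNorm_one_eq_lintegral_enorm.symm
      _ ≤ eLpNorm f (ENNReal.ofReal p) ν :=
          eLpNorm_le_eLpNorm_of_exponent_le (ENNReal.one_le_ofReal.2 hp) hf.1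
  rw [lintegral_rpow_enorm_eq_eLpNorm_rpow f hp0]
  gcongr

theorem enorm_setAverage_rpow_mul_le [NormedSpace ℝ E] {s : Set α} (hs : μ s ≠ ∞) (f : α → E)
    {p : ℝ} (hp : 1 ≤ p) : ‖⨍ a in s, f a ∂μ‖ₑ ^ p * μ s ≤ ∫⁻ a in s, ‖f a‖ₑ ^ p ∂μ := by
  have := isFiniteMeasure_restrict.2 hs
  rcases eq_or_ne (μ s) 0 with h0 | h0
  · simp [h0]
  calc ‖⨍ a in s, f a ∂μ‖ₑ ^ p * μ s ≤ (⨍⁻ a in s, ‖f a‖ₑ ^ p ∂μ) * μ s := by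
        gcongr
        exact enorm_average_rpow_le_laverage f hp
    _ = ∫⁻ a in s, ‖f a‖ₑ ^ p ∂μ := by rw [setLAverage_eq, ENNReal.div_mul_cancel h0 hs]

theorem enorm_setAverage_le_of_lintegral_rpow_le [NormedSpace ℝ E] {s : Set α} (hs₀ : μ s ≠ 0)
    (hs : μ s ≠ ∞) {f : α → E} {p : ℝ} (hp : 1 ≤ p) {C : ℝ≥0∞}
    (hC : ∫⁻ a in s, ‖f a‖ₑ ^ p ∂μ ≤ C) : ‖⨍ a in s, f a ∂μ‖ₑ ≤ (C / μ s) ^ p⁻¹ := by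
  rw [ENNReal.le_rpow_inv_iff (by linarith), ENNReal.le_div_iff_mul_le (.inl hs₀) (.inl hs)]
  exact (enorm_setAverage_rpow_mul_le hs f hp).trans hC

theorem eLpNorm_le_mul_add_mul_of_norm_le {f : α → E} {g : α → F} {k : α → G} {a b : ℝ}
    (ha : 0 ≤ a) (hb : 0 ≤ b) (hg : AEStronglyMeasurable g μ) (hk : AEStronglyMeasurable k μ)
    {q : ℝ≥0∞} (hq : 1 ≤ q) (hfgk : ∀ x, ‖f x‖ ≤ a * ‖g x‖ + b * ‖k x‖) :
    eLpNorm f q μ ≤ ENNReal.ofReal a * eLpNorm g q μ + ENNReal.ofReal b * eLpNorm k q μ :=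
  calc eLpNorm f q μ ≤ eLpNorm ((a • fun x => ‖g x‖) + b • fun x => ‖k x‖) q μ :=
        eLpNorm_mono_real hfgk
    _ ≤ eLpNorm (a • fun x => ‖g x‖) q μ + eLpNorm (b • fun x => ‖k x‖) q μ :=
        eLpNorm_add_le (hg.norm.const_smul a) (hk.norm.const_smul b) hq
    _ = ENNReal.ofReal a * eLpNorm g q μ + ENNReal.ofReal b * eLpNorm k q μ := by
        rw [eLpNorm_const_smul, eLpNorm_const_smul, eLpNorm_norm, eLpNorm_norm,
          Real.enorm_of_nonneg ha, Real.enorm_of_nonneg hb]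

theorem continuous_indicatorConstLp {p : ℝ≥0∞} [Fact (1 ≤ p)] {s : Set α} (hs : MeasurableSet s)
    (hμs : μ s ≠ ∞) : Continuous fun c : E => indicatorConstLp p hs hμs c :=
  AddMonoidHomClass.continuous_of_bound
    (AddMonoidHom.mk' (fun c => indicatorConstLp p hs hμs c) fun _ _ => indicatorConstLp_add.symm)
    (μ.real s ^ (1 / p.toReal)) fun _ =>
      (norm_indicatorConstLp_le (hs := hs) (hμs := hμs)).trans_eq (mul_comm _ _)

end LpAverages

theorem exists_subseq_tendsto_of_forall_isCompact_dist_le {X : Type*} [PseudoMetricSpace X]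
    [CompleteSpace X] (x : ℕ → X)
    (hx : ∀ ε > 0, ∃ K : Set X, IsCompact K ∧ ∀ n, ∃ y ∈ K, dist (x n) y ≤ ε) :
    ∃ a, ∃ φ : ℕ → ℕ, StrictMono φ ∧ Tendsto (x ∘ φ) atTop (𝓝 a) := by
  have htb : TotallyBounded (range x) := by
    refine Metric.totallyBounded_iff.2 fun ε hε => ?_
    obtain ⟨K, hK, hxK⟩ := hx (ε / 2) (half_pos hε)
    obtain ⟨t, ht, hKt⟩ := Metric.totallyBounded_iff.1 hK.totallyBounded (ε / 2) (half_pos hε)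
    refine ⟨t, ht, ?_⟩
    rintro _ ⟨n, rfl⟩
    obtain ⟨y, hyK, hny⟩ := hxK n
    obtain ⟨z, hzt, hyz⟩ := mem_iUnion₂.1 (hKt hyK)
    exact mem_iUnion₂.2 ⟨z, hzt, (dist_triangle _ y _).trans_lt
      (by linarith [Metric.mem_ball.1 hyz])⟩
  obtain ⟨a, -, φ, hφ, ha⟩ := (htb.closure.isCompact_of_isClosed isClosed_closure).tendsto_subseq
    fun n => subset_closure (mem_range_self n)
  exact ⟨a, φ, hφ, ha⟩

theorem ehrling_inequality {B₀ B B₁ : Type*} [NormedAddCommGroup B₀] [NormedSpace ℝ B₀]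
    [NormedAddCommGroup B] [NormedSpace ℝ B] [NormedAddCommGroup B₁] [NormedSpace ℝ B₁]
    (j₀ : B₀ →L[ℝ] B) (hj₀ : IsCompact (closure (j₀ '' Metric.closedBall 0 1)))
    (j₁ : B →L[ℝ] B₁) (hj₁ : Function.Injective j₁) {ε : ℝ} (hε : 0 < ε) :
    ∃ c, 0 ≤ c ∧ ∀ x, ‖j₀ x‖ ≤ ε * ‖x‖ + c * ‖j₁ (j₀ x)‖ := by
  have hK : IsCompact (closure (j₀ '' Metric.closedBall 0 1) ∩ {y | ε ≤ ‖y‖}) :=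
    hj₀.inter_right (isClosed_le continuous_const continuous_norm)
  obtain ⟨δ, hδ, hδK⟩ := hK.exists_forall_le' (continuous_norm.comp j₁.continuous).continuousOn
    fun y ⟨_, (hy : ε ≤ ‖y‖)⟩ => norm_pos_iff.2 fun hy0 => by
      rw [hj₁ (hy0.trans j₁.map_zero.symm), norm_zero] at hy
      linarith
  have hunit : ∀ x ∈ Metric.closedBall (0 : B₀) 1, ‖j₀ x‖ ≤ ε + ‖j₀‖ / δ * ‖j₁ (j₀ x)‖ := by
    intro x hx
    by_cases hy : ε ≤ ‖j₀ x‖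
    · have hδx := hδK (j₀ x) ⟨subset_closure (mem_image_of_mem _ hx), hy⟩
      calc ‖j₀ x‖ ≤ ‖j₀‖ :=
            (j₀.le_opNorm_of_le (mem_closedBall_zero_iff.1 hx)).trans_eq (mul_one _)
        _ ≤ ‖j₀‖ / δ * ‖j₁ (j₀ x)‖ := by
              rw [div_mul_eq_mul_div, le_div_iff₀ hδ]
              exact mul_le_mul_of_nonneg_left hδx (norm_nonneg _)
        _ ≤ ε + ‖j₀‖ / δ * ‖j₁ (j₀ x)‖ := by linarith
    · have : 0 ≤ ‖j₀‖ / δ * ‖j₁ (j₀ x)‖ := by positivity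
      linarith
  refine ⟨‖j₀‖ / δ, by positivity, fun x => ?_⟩
  rcases eq_or_ne x 0 with rfl | hx
  · simp
  have hx' := norm_pos_iff.2 hx
  have := hunit (‖x‖⁻¹ • x) (by simp [norm_smul, hx'.ne'])
  simp only [map_smul, norm_smul, norm_inv, norm_norm] at this
  calc ‖j₀ x‖ = ‖x‖ * (‖x‖⁻¹ * ‖j₀ x‖) := by field_simp
    _ ≤ ‖x‖ * (ε + ‖j₀‖ / δ * (‖x‖⁻¹ * ‖j₁ (j₀ x)‖)) := by gcongr
    _ = ε * ‖x‖ + ‖j₀‖ / δ * ‖j₁ (j₀ x)‖ := by field_simp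

theorem enorm_sub_rpow_le_of_abs_sub_le {E : Type*} [NormedAddCommGroup E] (g : ℝ → E)
    {t s h p β : ℝ} (hp : 0 < p) (hβ : 0 ≤ β) (hts : |t - s| ≤ h) :
    ‖g t - g s‖ₑ ^ p ≤
      ENNReal.ofReal (h ^ β) * ENNReal.ofReal (‖g t - g s‖ ^ p / |t - s| ^ β) := by
  rcases eq_or_ne t s with rfl | hne
  · simp [hp]
  have hh : 0 ≤ h := (abs_nonneg _).trans hts
  have hpos : 0 < |t - s| ^ β := Real.rpow_pos_of_pos (abs_pos.2 (sub_ne_zero.2 hne)) β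
  rw [← ofReal_norm_rpow _ hp.le, ← ENNReal.ofReal_mul (by positivity)]
  refine ENNReal.ofReal_le_ofReal ?_
  calc ‖g t - g s‖ ^ p = |t - s| ^ β * (‖g t - g s‖ ^ p / |t - s| ^ β) := by field_simp
    _ ≤ h ^ β * (‖g t - g s‖ ^ p / |t - s| ^ β) := by gcongr

noncomputable def gagliardoSeminormPow {F : Type*} [NormedAddCommGroup F] (g : ℝ → F) (p α : ℝ)
    (s : Set ℝ) : ℝ≥0∞ :=
  ∫⁻ t in s, ∫⁻ u in s, ENNReal.ofReal (‖g t - g u‖ ^ p / |t - u| ^ (1 + α * p))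

def block (h : ℝ) (k : ℕ) : Set ℝ := Ico (k * h) (k * h + h)

section Blocks

variable {h : ℝ} {N k : ℕ} {t : ℝ}

theorem measurableSet_block : MeasurableSet (block h k) := measurableSet_Ico

theorem volume_block : volume (block h k) = ENNReal.ofReal h := by
  simp [block]

theorem block_subset_Ico (hh : 0 ≤ h) (hk : k < N) : block h k ⊆ Ico 0 (N * h) := by
  have : (k : ℝ) + 1 ≤ N := by exact_mod_cast hk
  exact Ico_subset_Ico (by positivity) (by nlinarith)

theorem disjoint_block (hh : 0 ≤ h) {k k' : ℕ} (hkk' : k ≠ k') :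
    Disjoint (block h k) (block h k') := by
  wlog hlt : k < k' generalizing k k'
  · exact (this hkk'.symm (by omega)).symm
  have : (k : ℝ) + 1 ≤ k' := by exact_mod_cast hlt
  exact disjoint_left.2 fun t ht ht' => (ht.2.trans_le (by nlinarith)).not_ge ht'.1

theorem exists_mem_block (hh : 0 < h) (ht : t ∈ Ico 0 (N * h)) : ∃ k < N, t ∈ block h k := by
  have h0 : 0 ≤ t / h := div_nonneg ht.1 hh.le
  refine ⟨⌊t / h⌋₊, (Nat.floor_lt h0).2 ((div_lt_iff₀ hh).2 ht.2), ?_, ?_⟩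
  · exact (le_div_iff₀ hh).1 (Nat.floor_le h0)
  · have := Nat.lt_floor_add_one (t / h)
    rw [div_lt_iff₀ hh] at this
    linarith

theorem abs_sub_le_of_mem_block {s : ℝ} (ht : t ∈ block h k) (hs : s ∈ block h k) :
    |t - s| ≤ h := by
  rw [block, mem_Ico] at ht hs
  exact abs_sub_le_iff.2 ⟨by linarith, by linarith⟩

theorem lintegral_Ico_eq_sum_block (hh : 0 ≤ h) (N : ℕ) (F : ℝ → ℝ≥0∞) :
    ∫⁻ t in Ico 0 (N * h), F t = ∑ k ∈ Finset.range N, ∫⁻ t in block h k, F t := by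
  induction N with
  | zero => simp
  | succ n ih =>
    rw [Finset.sum_range_succ, ← ih, ← lintegral_union measurableSet_block
      Ico_disjoint_Ico_same, block, Ico_union_Ico_eq_Ico (by positivity) (by linarith)]
    push_cast
    ring_nf

variable {E : Type*} [NormedAddCommGroup E]

noncomputable def stepFun (h : ℝ) (N : ℕ) (z : ℕ → E) (t : ℝ) : E :=
  ∑ k ∈ Finset.range N, (block h k).indicator (fun _ => z k) t

theorem stepFun_apply_of_mem (hh : 0 ≤ h) (z : ℕ → E) (hk : k < N) (ht : t ∈ block h k) :
    stepFun h N z t = z k := by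
  rw [stepFun, Finset.sum_eq_single_of_mem k (Finset.mem_range.2 hk) fun k' _ hne =>
    indicator_of_notMem ((disjoint_block hh hne).notMem_of_mem_right ht) _, indicator_of_mem ht]

theorem stronglyMeasurable_stepFun (z : ℕ → E) : StronglyMeasurable (stepFun h N z) :=
  Finset.stronglyMeasurable_fun_sum _ fun _ _ =>
    stronglyMeasurable_const.indicator measurableSet_block

theorem map_stepFun {F G : Type*} [NormedAddCommGroup F] [FunLike G E F]
    [AddMonoidHomClass G E F] (L : G) (z : ℕ → E) (t : ℝ) :
    L (stepFun h N z t) = stepFun h N (fun k => L (z k)) t := by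
  simp only [stepFun, map_sum, map_indicator, Function.comp_def]

theorem exists_isCompact_ae_eq_stepFun {μ : Measure ℝ} [IsFiniteMeasure μ] {p : ℝ≥0∞}
    [Fact (1 ≤ p)] (h : ℝ) (N : ℕ) {K : Set E} (hK : IsCompact K) :
    ∃ S : Set (Lp E p μ), IsCompact S ∧
      ∀ z : ℕ → E, (∀ k < N, z k ∈ K) → ∃ F ∈ S, F =ᵐ[μ] stepFun h N z := by
  let Φ : (Fin N → E) → Lp E p μ := fun w =>
    ∑ k : Fin N, indicatorConstLp p measurableSet_block (measure_ne_top μ (block h k)) (w k)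
  have hΦ : Continuous Φ := continuous_finsetSum _ fun k _ =>
    (continuous_indicatorConstLp measurableSet_block (measure_ne_top μ _)).comp
      (continuous_apply k)
  refine ⟨Φ '' univ.pi fun _ => K, (isCompact_univ_pi fun _ => hK).image hΦ, fun z hz =>
    ⟨Φ fun k => z k, mem_image_of_mem _ fun k _ => hz k k.2, ?_⟩⟩
  have hind : ∀ᵐ t ∂μ, ∀ k : Fin N,
      indicatorConstLp p measurableSet_block (measure_ne_top μ (block h k)) (z k) t =
        (block h k).indicator (fun _ => z k) t :=
    ae_all_iff.2 fun k => indicatorConstLp_coeFn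
  filter_upwards [Lp.coeFn_finsetSum Finset.univ fun k : Fin N =>
    indicatorConstLp p measurableSet_block (measure_ne_top μ (block h k)) (z k), hind]
    with t hsum hind
  rw [hsum, Finset.sum_apply, Finset.sum_congr rfl fun k _ => hind k, stepFun,
    Fin.sum_univ_eq_sum_range (fun k => (block h k).indicator (fun _ => z k) t)]

variable [NormedSpace ℝ E] {p α : ℝ}

noncomputable def blockAverage (h : ℝ) (N : ℕ) (f : ℝ → E) : ℝ → E :=
  stepFun h N fun k => ⨍ s in block h k, f s

theorem lintegral_rpow_blockAverage_le (hh : 0 ≤ h) (N : ℕ) (f : ℝ → E) (hp : 1 ≤ p) :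
    ∫⁻ t in Ico 0 (N * h), ‖blockAverage h N f t‖ₑ ^ p ≤ ∫⁻ t in Ico 0 (N * h), ‖f t‖ₑ ^ p := by
  rw [lintegral_Ico_eq_sum_block hh, lintegral_Ico_eq_sum_block hh]
  refine Finset.sum_le_sum fun k hk => ?_
  calc ∫⁻ t in block h k, ‖blockAverage h N f t‖ₑ ^ p
      = ∫⁻ _ in block h k, ‖⨍ s in block h k, f s‖ₑ ^ p :=
        setLIntegral_congr_fun measurableSet_block fun t ht => by
          rw [blockAverage, stepFun_apply_of_mem hh _ (Finset.mem_range.1 hk) ht]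
    _ ≤ ∫⁻ s in block h k, ‖f s‖ₑ ^ p := by
        rw [setLIntegral_const]
        exact enorm_setAverage_rpow_mul_le (by simp [volume_block]) f hp

theorem eLpNorm_blockAverage_le (hh : 0 ≤ h) (f : ℝ → E) (hp : 1 ≤ p) :
    eLpNorm (blockAverage h N f) (ENNReal.ofReal p) (volume.restrict (Ico 0 (N * h))) ≤
      eLpNorm f (ENNReal.ofReal p) (volume.restrict (Ico 0 (N * h))) := by
  rw [eLpNorm_ofReal_eq_lintegral_rpow _ (by linarith),
    eLpNorm_ofReal_eq_lintegral_rpow _ (by linarith)]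
  exact ENNReal.rpow_le_rpow (lintegral_rpow_blockAverage_le hh N f hp) (by positivity)

theorem norm_setAverage_block_le (hh : 0 < h) (hk : k < N) (hp : 1 ≤ p) {C : ℝ≥0∞} (hC : C ≠ ∞)
    {f : ℝ → E} (hf : ∫⁻ t in Ico 0 (N * h), ‖f t‖ₑ ^ p ≤ C) :
    ‖⨍ s in block h k, f s‖ ≤ ((C / ENNReal.ofReal h) ^ p⁻¹).toReal := by
  rw [← toReal_enorm]
  refine ENNReal.toReal_mono (ENNReal.rpow_ne_top_of_nonneg (by positivity)
    (ENNReal.div_ne_top hC (by simpa using hh))) ?_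
  rw [← volume_block (k := k)]
  exact enorm_setAverage_le_of_lintegral_rpow_le (by simp [volume_block, hh])
    (by simp [volume_block]) hp ((lintegral_mono_set (block_subset_Ico hh.le hk)).trans hf)

variable [CompleteSpace E]

theorem enorm_sub_blockAverage_rpow_le {g : ℝ → E} (hh : 0 < h) (hp : 1 ≤ p) (hα : 0 ≤ α)
    (hg : IntegrableOn g (Ico 0 (N * h))) (ht : t ∈ Ico 0 (N * h)) :
    ‖g t - blockAverage h N g t‖ₑ ^ p ≤ ENNReal.ofReal (h ^ (α * p)) *
      ∫⁻ s in Ico 0 (N * h), ENNReal.ofReal (‖g t - g s‖ ^ p / |t - s| ^ (1 + α * p)) := by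
  obtain ⟨k, hk, htk⟩ := exists_mem_block hh ht
  have hvol : volume (block h k) ≠ ∞ := by simp [volume_block]
  have hvol0 : volume (block h k) ≠ 0 := by simp [volume_block, hh]
  have hsub : ⨍ s in block h k, (g t - g s) = g t - ⨍ s in block h k, g s := by
    rw [setAverage_eq, integral_sub (integrableOn_const (C := g t) hvol)
      (hg.mono_set (block_subset_Ico hh.le hk)), smul_sub, ← setAverage_eq, ← setAverage_eq,
      setAverage_const hvol0 hvol]
  rw [blockAverage, stepFun_apply_of_mem hh.le _ hk htk, ← hsub,
    ← ENNReal.mul_le_mul_iff_left hvol0 hvol]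
  calc ‖⨍ s in block h k, (g t - g s)‖ₑ ^ p * volume (block h k)
      ≤ ∫⁻ s in block h k, ‖g t - g s‖ₑ ^ p := enorm_setAverage_rpow_mul_le hvol _ hp
    _ ≤ ∫⁻ s in block h k, ENNReal.ofReal (h ^ (1 + α * p)) *
          ENNReal.ofReal (‖g t - g s‖ ^ p / |t - s| ^ (1 + α * p)) :=
        setLIntegral_mono' measurableSet_block fun s hs =>
          enorm_sub_rpow_le_of_abs_sub_le g (by linarith) (by positivity)
            (abs_sub_le_of_mem_block htk hs)
    _ ≤ ENNReal.ofReal (h ^ (1 + α * p)) * ∫⁻ s in Ico 0 (N * h),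
          ENNReal.ofReal (‖g t - g s‖ ^ p / |t - s| ^ (1 + α * p)) := by
        rw [lintegral_const_mul' _ _ ENNReal.ofReal_ne_top]
        gcongr
        exact block_subset_Ico hh.le hk
    _ = _ := by
        rw [volume_block, Real.rpow_add hh, Real.rpow_one, ENNReal.ofReal_mul hh.le]
        ring

theorem eLpNorm_sub_blockAverage_le {g : ℝ → E} (hh : 0 < h) (hp : 1 ≤ p) (hα : 0 ≤ α)
    (hg : IntegrableOn g (Ico 0 (N * h))) :
    eLpNorm (g - blockAverage h N g) (ENNReal.ofReal p) (volume.restrict (Ico 0 (N * h))) ≤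
      ENNReal.ofReal (h ^ α) * gagliardoSeminormPow g p α (Ico 0 (N * h)) ^ (1 / p) := by
  have hp0 : 0 < p := by linarith
  rw [eLpNorm_ofReal_eq_lintegral_rpow _ hp0]
  calc (∫⁻ t in Ico 0 (N * h), ‖(g - blockAverage h N g) t‖ₑ ^ p) ^ (1 / p)
      ≤ (ENNReal.ofReal (h ^ (α * p)) * gagliardoSeminormPow g p α (Ico 0 (N * h))) ^ (1 / p) := by
        rw [gagliardoSeminormPow, ← lintegral_const_mul' _ _ ENNReal.ofReal_ne_top]
        exact ENNReal.rpow_le_rpow (setLIntegral_mono' measurableSet_Ico fun t ht =>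
          enorm_sub_blockAverage_rpow_le hh hp hα hg ht) (by positivity)
    _ = ENNReal.ofReal (h ^ α) * gagliardoSeminormPow g p α (Ico 0 (N * h)) ^ (1 / p) := by
        rw [ENNReal.mul_rpow_of_nonneg _ _ (by positivity),
          ENNReal.ofReal_rpow_of_nonneg (by positivity) (by positivity), ← Real.rpow_mul hh.le,
          mul_one_div, mul_div_cancel_right₀ _ hp0.ne']

theorem ContinuousLinearMap.map_blockAverage {F : Type*} [NormedAddCommGroup F] [NormedSpace ℝ F]
    [CompleteSpace F] (L : E →L[ℝ] F) (hh : 0 ≤ h) {f : ℝ → E}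
    (hf : IntegrableOn f (Ico 0 (N * h))) (t : ℝ) :
    L (blockAverage h N f t) = blockAverage h N (fun s => L (f s)) t := by
  rw [blockAverage, map_stepFun, blockAverage, stepFun, stepFun]
  refine Finset.sum_congr rfl fun k hk => ?_
  rw [setAverage_eq, setAverage_eq, map_smul,
    L.integral_comp_comm (hf.mono_set (block_subset_Ico hh (Finset.mem_range.1 hk)))]

end Blocks

theorem exists_nat_mul_eq_rpow_le {T α τ : ℝ} (hT : 0 < T) (hα : 0 < α) (hτ : 0 < τ) :
    ∃ (N : ℕ) (h : ℝ), 0 < h ∧ N * h = T ∧ h ^ α ≤ τ := by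
  have hlim : Tendsto (fun N : ℕ => (T / N) ^ α) atTop (𝓝 0) := by
    simpa [Function.comp_def, Real.zero_rpow hα.ne'] using (Real.continuousAt_rpow_const 0 α
      (.inr hα.le)).tendsto.comp (tendsto_const_div_atTop_nhds_zero_nat T)
  obtain ⟨N, hNτ, hN⟩ := ((hlim.eventually (ge_mem_nhds hτ)).and (eventually_gt_atTop 0)).exists
  exact ⟨N, T / N, by positivity, by field_simp, hNτ⟩

section Embedding

variable {B₀ B B₁ : Type*} [NormedAddCommGroup B₀] [NormedSpace ℝ B₀]
  [NormedAddCommGroup B] [NormedSpace ℝ B] [NormedAddCommGroup B₁] [NormedSpace ℝ B₁]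
  (j₀ : B₀ →L[ℝ] B) (j₁ : B →L[ℝ] B₁) {h p α : ℝ} {N : ℕ}

theorem exists_isCompact_ae_eq_comp_blockAverage
    (hj₀ : ∀ s : Set B₀, Bornology.IsBounded s → IsCompact (closure (j₀ '' s)))
    [hp : Fact (1 ≤ ENNReal.ofReal p)] (hh : 0 < h) (N : ℕ) {C : ℝ≥0∞} (hC : C ≠ ∞) :
    ∃ S : Set (Lp B (ENNReal.ofReal p) (volume.restrict (Ico 0 (N * h)))), IsCompact S ∧
      ∀ f : ℝ → B₀, ∫⁻ t in Ico 0 (N * h), ‖f t‖ₑ ^ p ≤ C →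
        ∃ F ∈ S, F =ᵐ[volume.restrict (Ico 0 (N * h))] fun t => j₀ (blockAverage h N f t) := by
  set R := ((C / ENNReal.ofReal h) ^ p⁻¹).toReal
  obtain ⟨S, hS, hSstep⟩ := exists_isCompact_ae_eq_stepFun (p := ENNReal.ofReal p)
    (μ := volume.restrict (Ico 0 (N * h))) h N (hj₀ _ (Metric.isBounded_closedBall (r := R)))
  refine ⟨S, hS, fun f hf => ?_⟩
  obtain ⟨F, hFS, hF⟩ := hSstep (fun k => j₀ (⨍ s in block h k, f s)) fun k hk =>
    subset_closure <| mem_image_of_mem _ <| mem_closedBall_zero_iff.2 <|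
      norm_setAverage_block_le hh hk (ENNReal.one_le_ofReal.1 hp.out) hC hf
  exact ⟨F, hFS, hF.trans (.of_eq (funext fun t => (map_stepFun j₀ _ t).symm))⟩

variable [CompleteSpace B₀] [CompleteSpace B₁]

theorem eLpNorm_comp_sub_comp_blockAverage_le {ε c : ℝ} (hε : 0 ≤ ε) (hc : 0 ≤ c)
    (hehr : ∀ x, ‖j₀ x‖ ≤ ε * ‖x‖ + c * ‖j₁ (j₀ x)‖) (hh : 0 < h) (hp : 1 ≤ p) (hα : 0 ≤ α)
    {f : ℝ → B₀} (hf : MemLp f (ENNReal.ofReal p) (volume.restrict (Ico 0 (N * h)))) :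
    eLpNorm (fun t => j₀ (f t) - j₀ (blockAverage h N f t)) (ENNReal.ofReal p)
        (volume.restrict (Ico 0 (N * h))) ≤
      ENNReal.ofReal ε * (2 * eLpNorm f (ENNReal.ofReal p) (volume.restrict (Ico 0 (N * h)))) +
        ENNReal.ofReal c * (ENNReal.ofReal (h ^ α) *
          gagliardoSeminormPow (fun t => j₁ (j₀ (f t))) p α (Ico 0 (N * h)) ^ (1 / p)) := by
  set μ := volume.restrict (Ico (0 : ℝ) (N * h))
  have hq : 1 ≤ ENNReal.ofReal p := ENNReal.one_le_ofReal.2 hp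
  have hfi : IntegrableOn f (Ico 0 (N * h)) := hf.integrable hq
  have hP : AEStronglyMeasurable (blockAverage h N f) μ :=
    (stronglyMeasurable_stepFun _).aestronglyMeasurable
  have hcomm : (fun t => j₁ (j₀ ((f - blockAverage h N f) t))) =
      (fun t => j₁ (j₀ (f t))) - blockAverage h N fun t => j₁ (j₀ (f t)) := by
    ext t
    simp only [Pi.sub_apply, map_sub]
    exact congrArg _ ((j₁.comp j₀).map_blockAverage hh.le hfi t)
  calc eLpNorm (fun t => j₀ (f t) - j₀ (blockAverage h N f t)) (ENNReal.ofReal p) μ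
      = eLpNorm (fun t => j₀ ((f - blockAverage h N f) t)) (ENNReal.ofReal p) μ := by
        simp only [Pi.sub_apply, map_sub]
    _ ≤ ENNReal.ofReal ε * eLpNorm (f - blockAverage h N f) (ENNReal.ofReal p) μ +
          ENNReal.ofReal c * eLpNorm (fun t => j₁ (j₀ ((f - blockAverage h N f) t)))
            (ENNReal.ofReal p) μ :=
        eLpNorm_le_mul_add_mul_of_norm_le hε hc (hf.1.sub hP)
          ((j₁.comp j₀).continuous.comp_aestronglyMeasurable (hf.1.sub hP)) hq fun t => hehr _
    _ ≤ _ := by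
        rw [hcomm, two_mul]
        gcongr
        · exact (eLpNorm_sub_le hf.1 hP hq).trans
            (add_le_add_right (eLpNorm_blockAverage_le hh.le f hp) _)
        · exact eLpNorm_sub_blockAverage_le hh hp hα ((j₁.comp j₀).integrable_comp hfi)

theorem exists_isCompact_forall_eLpNorm_comp_sub_le_of_ehrling
    (hj₀ : ∀ s : Set B₀, Bornology.IsBounded s → IsCompact (closure (j₀ '' s)))
    [hp : Fact (1 ≤ ENNReal.ofReal p)] {ε c : ℝ} (hε : 0 ≤ ε) (hc : 0 ≤ c)
    (hehr : ∀ x, ‖j₀ x‖ ≤ ε * ‖x‖ + c * ‖j₁ (j₀ x)‖) (hh : 0 < h) (N : ℕ) (hα : 0 ≤ α)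
    {C : ℝ≥0∞} (hC : C ≠ ∞) :
    ∃ S : Set (Lp B (ENNReal.ofReal p) (volume.restrict (Ico 0 (N * h)))), IsCompact S ∧
      ∀ f : ℝ → B₀, AEStronglyMeasurable f (volume.restrict (Ico 0 (N * h))) →
        ∫⁻ t in Ico 0 (N * h), ‖f t‖ₑ ^ p ≤ C →
        gagliardoSeminormPow (fun t => j₁ (j₀ (f t))) p α (Ico 0 (N * h)) ≤ C →
        ∃ F ∈ S, eLpNorm (fun t => j₀ (f t) - F t) (ENNReal.ofReal p)
          (volume.restrict (Ico 0 (N * h))) ≤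
            ENNReal.ofReal ε * (2 * C ^ (1 / p)) +
              ENNReal.ofReal c * (ENNReal.ofReal (h ^ α) * C ^ (1 / p)) := by
  have hp1 : 1 ≤ p := ENNReal.one_le_ofReal.1 hp.out
  obtain ⟨S, hS, hSP⟩ := exists_isCompact_ae_eq_comp_blockAverage j₀ hj₀ (p := p) hh N hC
  refine ⟨S, hS, fun f hfm hf hg => ?_⟩
  have hfC := eLpNorm_ofReal_le_of_lintegral_rpow_le (by linarith) hf
  obtain ⟨F, hFS, hF⟩ := hSP f hf
  refine ⟨F, hFS, ?_⟩
  rw [eLpNorm_congr_ae (hF.mono fun t ht => congrArg (j₀ (f t) - ·) ht)]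
  refine (eLpNorm_comp_sub_comp_blockAverage_le j₀ j₁ hε hc hehr hh hp1 hα
    ⟨hfm, hfC.trans_lt (ENNReal.rpow_lt_top_of_nonneg (by positivity) hC)⟩).trans ?_
  gcongr

theorem exists_isCompact_forall_eLpNorm_comp_sub_le
    (hj₀ : ∀ s : Set B₀, Bornology.IsBounded s → IsCompact (closure (j₀ '' s)))
    (hj₁ : Function.Injective j₁) {T : ℝ} (hT : 0 < T) [hp : Fact (1 ≤ ENNReal.ofReal p)]
    (hα : 0 < α) {C : ℝ≥0∞} (hC : C ≠ ∞) {ε : ℝ} (hε : 0 < ε) :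
    ∃ S : Set (Lp B (ENNReal.ofReal p) (volume.restrict (Ico 0 T))), IsCompact S ∧
      ∀ f : ℝ → B₀, AEStronglyMeasurable f (volume.restrict (Ico 0 T)) →
        ∫⁻ t in Ico 0 T, ‖f t‖ₑ ^ p ≤ C →
        gagliardoSeminormPow (fun t => j₁ (j₀ (f t))) p α (Ico 0 T) ≤ C →
        ∃ F ∈ S, eLpNorm (fun t => j₀ (f t) - F t) (ENNReal.ofReal p)
          (volume.restrict (Ico 0 T)) ≤ ENNReal.ofReal ε := by
  have hp0 : 0 < p := by linarith [ENNReal.one_le_ofReal.1 hp.out]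
  set M := (C ^ (1 / p)).toReal
  have hM0 : 0 ≤ M := ENNReal.toReal_nonneg
  have hM : C ^ (1 / p) = ENNReal.ofReal M :=
    (ENNReal.ofReal_toReal (ENNReal.rpow_ne_top_of_nonneg (by positivity) hC)).symm
  have hsmall : ∀ y, 0 ≤ y → ε / 2 / (y + 1) * y ≤ ε / 2 := fun y hy => by
    rw [div_mul_eq_mul_div, div_le_iff₀ (by positivity)]
    nlinarith
  -- The Ehrling constant and the mesh `h` make each of the two error terms at most `ε / 2`.
  obtain ⟨c, hc, hehr⟩ := ehrling_inequality j₀ (hj₀ _ Metric.isBounded_closedBall) j₁ hj₁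
    (show 0 < ε / 2 / (2 * M + 1) by positivity)
  obtain ⟨N, h, hh, rfl, hhα⟩ := exists_nat_mul_eq_rpow_le hT hα
    (show 0 < ε / 2 / (c * M + 1) by positivity)
  obtain ⟨S, hS, hSf⟩ := exists_isCompact_forall_eLpNorm_comp_sub_le_of_ehrling j₀ j₁ hj₀
    (p := p) (by positivity) hc hehr hh N hα.le hC
  refine ⟨S, hS, fun f hfm hf hg => ?_⟩
  obtain ⟨F, hFS, hF⟩ := hSf f hfm hf hg
  refine ⟨F, hFS, hF.trans ?_⟩
  rw [hM, ← ENNReal.ofReal_ofNat 2, ← ENNReal.ofReal_mul (by norm_num),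
    ← ENNReal.ofReal_mul (by positivity), ← ENNReal.ofReal_mul (by positivity),
    ← ENNReal.ofReal_mul hc, ← ENNReal.ofReal_add (by positivity) (by positivity)]
  refine ENNReal.ofReal_le_ofReal ?_
  have hcM : c * (h ^ α * M) ≤ ε / 2 / (c * M + 1) * (c * M) :=
    calc c * (h ^ α * M) = h ^ α * (c * M) := by ring
      _ ≤ ε / 2 / (c * M + 1) * (c * M) := by gcongr
  linarith [hsmall (2 * M) (by positivity), hsmall (c * M) (by positivity)]

end Embedding

theorem compact_embedding_Lp_cap_WalphaP_general
    {B₀ B B₁ : Type*}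
    [NormedAddCommGroup B₀] [NormedSpace ℝ B₀] [CompleteSpace B₀]
    [NormedAddCommGroup B] [NormedSpace ℝ B] [CompleteSpace B]
    [NormedAddCommGroup B₁] [NormedSpace ℝ B₁] [CompleteSpace B₁]
    (j₀ : B₀ →L[ℝ] B)
    (hj₀cpt : ∀ s : Set B₀, Bornology.IsBounded s → IsCompact (closure (⇑j₀ '' s)))
    (j₁ : B →L[ℝ] B₁) (hj₁inj : Function.Injective j₁)
    (T : ℝ) (hT : 0 < T) (p : ℝ) (hp : 1 < p) (α : ℝ) (hα : α ∈ Set.Ioo (0 : ℝ) 1)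
    (u : ℕ → ℝ → B₀)
    (humeas : ∀ n, AEStronglyMeasurable (u n) (volume.restrict (Set.Icc 0 T)))
    (C : ENNReal) (hC : C < ⊤)
    (hbound : ∀ n,
      (∫⁻ t in Set.Icc 0 T, ENNReal.ofReal (‖u n t‖ ^ p)) +
        (∫⁻ t in Set.Icc 0 T, ∫⁻ s in Set.Icc 0 T,
          ENNReal.ofReal (‖j₁ (j₀ (u n t)) - j₁ (j₀ (u n s))‖ ^ p / |t - s| ^ (1 + α * p))) ≤
        C) :
    ∃ φ : ℕ → ℕ, StrictMono φ ∧ ∃ v : ℝ → B,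
      AEStronglyMeasurable v (volume.restrict (Set.Icc 0 T)) ∧
      (∫⁻ t in Set.Icc 0 T, ENNReal.ofReal (‖v t‖ ^ p)) < ⊤ ∧
      Tendsto (fun k => ∫⁻ t in Set.Icc 0 T, ENNReal.ofReal (‖j₀ (u (φ k) t) - v t‖ ^ p))
        atTop (nhds 0) := by
  have hp0 : 0 < p := by linarith
  have : Fact (1 ≤ ENNReal.ofReal p) := ⟨ENNReal.one_le_ofReal.2 hp.le⟩
  rw [← Measure.restrict_congr_set Ico_ae_eq_Icc] at humeas hbound ⊢
  simp_rw [ofReal_norm_rpow _ hp0.le] at hbound ⊢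
  have hf n : ∫⁻ t in Ico 0 T, ‖u n t‖ₑ ^ p ≤ C := le_self_add.trans (hbound n)
  have hmem n : MemLp (fun t => j₀ (u n t)) (ENNReal.ofReal p) (volume.restrict (Ico 0 T)) :=
    j₀.comp_memLp' ⟨humeas n, (eLpNorm_ofReal_le_of_lintegral_rpow_le hp0 (hf n)).trans_lt
      (ENNReal.rpow_lt_top_of_nonneg (by positivity) hC.ne)⟩
  obtain ⟨V, φ, hφ, hV⟩ := exists_subseq_tendsto_of_forall_isCompact_dist_le
    (fun n => (hmem n).toLp) fun ε hε => by
      obtain ⟨S, hS, hSu⟩ := exists_isCompact_forall_eLpNorm_comp_sub_le j₀ j₁ hj₀cpt hj₁inj hT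
        (p := p) hα.1 hC.ne hε
      refine ⟨S, hS, fun n => ?_⟩
      obtain ⟨F, hFS, hF⟩ := hSu (u n) (humeas n) (hf n) (le_add_self.trans (hbound n))
      exact ⟨F, hFS, (edist_le_ofReal hε.le).1 (edist_toLp_eq_eLpNorm_sub (hmem n) F ▸ hF)⟩
  refine ⟨φ, hφ, V, Lp.aestronglyMeasurable V, ?_, ?_⟩
  · rw [lintegral_rpow_enorm_eq_eLpNorm_rpow _ hp0]
    exact ENNReal.rpow_lt_top_of_nonneg hp0.le (Lp.eLpNorm_ne_top V)
  · have hlim := ((ENNReal.continuous_rpow_const (y := p)).tendsto 0).comp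
      (tendsto_iff_edist_tendsto_0.1 hV)
    simp_rw [Function.comp_apply, edist_toLp_eq_eLpNorm_sub, ENNReal.zero_rpow_of_pos hp0] at hlim
    simpa only [lintegral_rpow_enorm_eq_eLpNorm_rpow _ hp0, Function.comp_def] using hlim

/-- Compactness of the embedding `L^p([0,T];B₀) ∩ W^{α,p}([0,T];B₁) ⊆ L^p([0,T];B)`
(Flandoli–Gatarek / Lemma 5.1 of the paper). The Banach spaces `B₀ ⊆ B ⊆ B₁` are encoded by
injective continuous linear maps `j₀ : B₀ → B` and `j₁ : B → B₁`, with `B₀, B₁` reflexive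
(the inclusion into the double dual is surjective) and `j₀` a compact operator (mapping
bounded sets to relatively compact sets). -/
theorem compact_embedding_Lp_cap_WalphaP
    {B₀ B B₁ : Type*}
    [NormedAddCommGroup B₀] [NormedSpace ℝ B₀] [CompleteSpace B₀]
    [NormedAddCommGroup B] [NormedSpace ℝ B] [CompleteSpace B]
    [NormedAddCommGroup B₁] [NormedSpace ℝ B₁] [CompleteSpace B₁]
    (hrefl₀ : Function.Surjective (NormedSpace.inclusionInDoubleDual ℝ B₀))
    (hrefl₁ : Function.Surjective (NormedSpace.inclusionInDoubleDual ℝ B₁))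
    (j₀ : B₀ →L[ℝ] B) (hj₀inj : Function.Injective j₀)
    (hj₀cpt : ∀ s : Set B₀, Bornology.IsBounded s → IsCompact (closure (⇑j₀ '' s)))
    (j₁ : B →L[ℝ] B₁) (hj₁inj : Function.Injective j₁)
    (T : ℝ) (hT : 0 < T) (p : ℝ) (hp : 1 < p) (α : ℝ) (hα : α ∈ Set.Ioo (0 : ℝ) 1)
    (u : ℕ → ℝ → B₀)
    (humeas : ∀ n, AEStronglyMeasurable (u n) (volume.restrict (Set.Icc 0 T)))
    (C : ENNReal) (hC : C < ⊤)
    (hbound : ∀ n,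
      (∫⁻ t in Set.Icc 0 T, ENNReal.ofReal (‖u n t‖ ^ p)) +
        (∫⁻ t in Set.Icc 0 T, ∫⁻ s in Set.Icc 0 T,
          ENNReal.ofReal (‖j₁ (j₀ (u n t)) - j₁ (j₀ (u n s))‖ ^ p / |t - s| ^ (1 + α * p))) ≤
        C) :
    ∃ φ : ℕ → ℕ, StrictMono φ ∧ ∃ v : ℝ → B,
      AEStronglyMeasurable v (volume.restrict (Set.Icc 0 T)) ∧
      (∫⁻ t in Set.Icc 0 T, ENNReal.ofReal (‖v t‖ ^ p)) < ⊤ ∧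
      Tendsto (fun k => ∫⁻ t in Set.Icc 0 T, ENNReal.ofReal (‖j₀ (u (φ k) t) - v t‖ ^ p))
        atTop (nhds 0) :=
  compact_embedding_Lp_cap_WalphaP_general j₀ hj₀cpt j₁ hj₁inj T hT p hp α hα u humeas C hC hbound
end
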